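/- arXiv:1704.00165 — 8 statements merged into one kernel-verified Lean document; each statement's English description precedes it below -/
import Mathlib

section
/- Four positive real numbers u₁, u₂, u₃, u₄ are, respectively, the two side lengths and the two diagonal lengths of some nondegenerate parallelogram in the Euclidean plane if and only if they satisfy the equation u₃² + u₄² = 2u₁² + 2u₂² and the inequalities |u₁ − u₂| < u₃ < u₁ + u₂. -/
/-!
The parallelogram law turns `B - A = F - E` into `u₃² + u₄² = 2u₁² + 2u₂²`, and in a strictly
convex space three points are non-collinear exactly when all three triangle inequalities between
them are strict, which for the triangle `A E F` reads `|u₁ - u₂| < u₃ < u₁ + u₂`. Conversely, a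
triangle with sides `u₁, u₂, u₃` is placed in coordinates, `B := A + (F - E)` completes it to a
parallelogram, and the parallelogram law forces its second diagonal to have length `u₄`.
-/

theorem collinear_iff_wbtw_or_wbtw_or_wbtw {R V P : Type*} [Field R] [LinearOrder R]
    [IsStrictOrderedRing R] [AddCommGroup V] [Module R V] [AddTorsor V P] {a b c : P} :
    Collinear R ({a, b, c} : Set P) ↔ Wbtw R a b c ∨ Wbtw R b c a ∨ Wbtw R c a b := by
  refine ⟨Collinear.wbtw_or_wbtw_or_wbtw, ?_⟩
  rintro (h | h | h)
  · exact h.collinear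
  · rw [Set.insert_comm, Set.pair_comm]; exact h.collinear
  · rw [Set.pair_comm, Set.insert_comm]; exact h.collinear

theorem not_collinear_iff_dist_lt_dist_add_dist {V P : Type*} [NormedAddCommGroup V]
    [NormedSpace ℝ V] [StrictConvexSpace ℝ V] [MetricSpace P] [NormedAddTorsor V P] {a b c : P} :
    ¬ Collinear ℝ ({a, b, c} : Set P) ↔
      dist a c < dist a b + dist b c ∧ dist b a < dist b c + dist c a ∧
        dist c b < dist c a + dist a b := by
  simp only [collinear_iff_wbtw_or_wbtw_or_wbtw, not_or, ← dist_lt_dist_add_dist_iff]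

theorem dist_sq_add_dist_sq_of_sub_eq_sub {V : Type*} [NormedAddCommGroup V]
    [InnerProductSpace ℝ V] {A B E F : V} (h : B - A = F - E) :
    dist A F ^ 2 + dist E B ^ 2 = 2 * dist A E ^ 2 + 2 * dist E F ^ 2 := by
  have hB : B - E = (A - E) + (F - E) := by rw [← h]; abel
  have hA : A - F = (A - E) - (F - E) := by abel
  rw [dist_eq_norm A F, dist_eq_norm' E B, dist_eq_norm A E, dist_eq_norm' E F, hB, hA, add_comm,
    parallelogram_law_with_norm ℝ]
  ring

theorem EuclideanSpace.dist_sq_toLp_two (x₁ y₁ x₂ y₂ : ℝ) :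
    dist !₂[x₁, y₁] !₂[x₂, y₂] ^ 2 = (x₁ - x₂) ^ 2 + (y₁ - y₂) ^ 2 := by
  simp [EuclideanSpace.dist_sq_eq, Fin.sum_univ_two, Real.dist_eq, sq_abs]

theorem exists_dist_eq_of_abs_sub_le_of_le_add {a b c : ℝ} (ha : 0 < a) (hc₁ : |a - b| ≤ c)
    (hc₂ : c ≤ a + b) :
    ∃ A E F : EuclideanSpace ℝ (Fin 2), dist A E = a ∧ dist E F = b ∧ dist A F = c := by
  have hb : 0 ≤ b := by linarith [le_abs_self (a - b)]
  have hc : 0 ≤ c := (abs_nonneg _).trans hc₁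
  set x := (a ^ 2 + b ^ 2 - c ^ 2) / (2 * a) with hx
  have hax : 2 * a * x = a ^ 2 + b ^ 2 - c ^ 2 := by rw [hx]; field_simp
  have hx_sq : x ^ 2 ≤ b ^ 2 := by
    have h₁ : 0 ≤ c ^ 2 - (a - b) ^ 2 := by nlinarith [sq_abs (a - b), abs_nonneg (a - b)]
    have h₂ : 0 ≤ (a + b) ^ 2 - c ^ 2 := by nlinarith
    have key : (2 * a) ^ 2 * (b ^ 2 - x ^ 2) = (c ^ 2 - (a - b) ^ 2) * ((a + b) ^ 2 - c ^ 2) := by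
      linear_combination (-(2 * a * x + (a ^ 2 + b ^ 2 - c ^ 2))) * hax
    have := nonneg_of_mul_nonneg_right (key ▸ mul_nonneg h₁ h₂) (by positivity)
    linarith
  set y := √(b ^ 2 - x ^ 2)
  have hy : y ^ 2 = b ^ 2 - x ^ 2 := Real.sq_sqrt (by linarith)
  refine ⟨!₂[a, 0], !₂[0, 0], !₂[x, y], ?_, ?_, ?_⟩
  · rw [← sq_eq_sq₀ dist_nonneg ha.le, EuclideanSpace.dist_sq_toLp_two]; ring
  · rw [← sq_eq_sq₀ dist_nonneg hb, EuclideanSpace.dist_sq_toLp_two]; linear_combination hy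
  · rw [← sq_eq_sq₀ dist_nonneg hc, EuclideanSpace.dist_sq_toLp_two]; linear_combination hy - hax

theorem parallelogram_characterization_u3_general
    (u₁ u₂ u₃ u₄ : ℝ) (h₁ : 0 < u₁) (h₄ : 0 < u₄) :
    (∃ A B F E : EuclideanSpace ℝ (Fin 2),
        B - A = F - E ∧
        ¬ Collinear ℝ ({A, E, F} : Set (EuclideanSpace ℝ (Fin 2))) ∧
        dist A E = u₁ ∧ dist E F = u₂ ∧ dist A F = u₃ ∧ dist E B = u₄) ↔
      (u₃ ^ 2 + u₄ ^ 2 = 2 * u₁ ^ 2 + 2 * u₂ ^ 2 ∧ |u₁ - u₂| < u₃ ∧ u₃ < u₁ + u₂) := by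
  constructor
  · rintro ⟨A, B, F, E, hpar, hncol, rfl, rfl, rfl, rfl⟩
    obtain ⟨hAF, hEA, hFE⟩ := not_collinear_iff_dist_lt_dist_add_dist.1 hncol
    simp only [dist_comm E A, dist_comm F A, dist_comm F E] at hEA hFE
    exact ⟨dist_sq_add_dist_sq_of_sub_eq_sub hpar, abs_sub_lt_iff.2 ⟨by linarith, by linarith⟩, hAF⟩
  · rintro ⟨hdiag, habs, hlt⟩
    obtain ⟨A, E, F, rfl, rfl, rfl⟩ := exists_dist_eq_of_abs_sub_le_of_le_add h₁ habs.le hlt.le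
    have hpar : A + (F - E) - A = F - E := add_sub_cancel_left _ _
    refine ⟨A, A + (F - E), F, E, hpar, ?_, rfl, rfl, rfl, ?_⟩
    · rw [abs_sub_lt_iff] at habs
      rw [not_collinear_iff_dist_lt_dist_add_dist, dist_comm E A, dist_comm F A, dist_comm F E]
      exact ⟨hlt, by linarith, by linarith⟩
    · rw [← sq_eq_sq₀ dist_nonneg h₄.le]
      linarith [dist_sq_add_dist_sq_of_sub_eq_sub hpar]

/-- A nondegenerate parallelogram in the Euclidean plane is a quadruple of points
`A B F E` with `B - A = F - E` and `A, E, F` not collinear; `u₁ = dist A E`,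
`u₂ = dist E F` are its side lengths, `u₃ = dist A F`, `u₄ = dist E B` its diagonals. -/
theorem parallelogram_characterization_u3
    (u₁ u₂ u₃ u₄ : ℝ) (h₁ : 0 < u₁) (h₂ : 0 < u₂) (h₃ : 0 < u₃) (h₄ : 0 < u₄) :
    (∃ A B F E : EuclideanSpace ℝ (Fin 2),
        B - A = F - E ∧
        ¬ Collinear ℝ ({A, E, F} : Set (EuclideanSpace ℝ (Fin 2))) ∧
        dist A E = u₁ ∧ dist E F = u₂ ∧ dist A F = u₃ ∧ dist E B = u₄) ↔
      (u₃ ^ 2 + u₄ ^ 2 = 2 * u₁ ^ 2 + 2 * u₂ ^ 2 ∧ |u₁ - u₂| < u₃ ∧ u₃ < u₁ + u₂) :=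
  parallelogram_characterization_u3_general u₁ u₂ u₃ u₄ h₁ h₄
end

section
/- Four positive real numbers u₁, u₂, u₃, u₄ are, respectively, the two side lengths and the two diagonal lengths of some nondegenerate parallelogram in the Euclidean plane if and only if they satisfy the equation u₃² + u₄² = 2u₁² + 2u₂² and the inequalities |u₁ − u₂| < u₄ < u₁ + u₂. -/
/-!
With `x = A - E` and `y = F - E` the four lengths are `‖x‖`, `‖y‖`, `‖x - y‖` and `‖x + y‖`, so the
equation is the parallelogram law and `u₄² - u₁² - u₂² = 2⟪x, y⟫`. Nondegeneracy says that `x` and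
`y` are linearly independent, i.e. that Cauchy–Schwarz is strict, `|⟪x, y⟫| < u₁ u₂`, and this is
equivalent to the triangle inequalities for `u₄`. Conversely, any such Gram data is realised in
the plane.
-/

open RealInnerProductSpace

section Collinear

variable {k V P : Type*} [Field k] [AddCommGroup V] [Module k V] [AddTorsor V P]

theorem collinear_iff_not_linearIndependent_vsub {A E F : P} :
    Collinear k ({A, E, F} : Set P) ↔ ¬LinearIndependent k ![A -ᵥ E, F -ᵥ E] := by
  rw [collinear_iff_of_mem (p₀ := E) (by simp), linearIndependent_fin2]
  simp only [Set.mem_insert_iff, Set.mem_singleton_iff, forall_eq_or_imp, forall_eq,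
    Matrix.cons_val_one, Matrix.cons_val_zero, eq_vadd_iff_vsub_eq, vsub_self, not_and, not_forall,
    not_not]
  constructor
  · rintro ⟨v, ⟨r, hr⟩, -, ⟨s, hs⟩⟩ hy
    have hs0 : s ≠ 0 := by rintro rfl; exact hy (by simpa using hs)
    exact ⟨r / s, by rw [hr, hs, smul_smul, div_mul_cancel₀ r hs0]⟩
  · intro h
    by_cases hy : F -ᵥ E = 0
    · exact ⟨A -ᵥ E, ⟨1, (one_smul k _).symm⟩, ⟨0, (zero_smul k _).symm⟩, ⟨0, by rw [hy, zero_smul]⟩⟩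
    · obtain ⟨a, ha⟩ := h hy
      exact ⟨F -ᵥ E, ⟨a, ha.symm⟩, ⟨0, (zero_smul k _).symm⟩, ⟨1, (one_smul k _).symm⟩⟩

end Collinear

theorem linearIndependent_pair_iff_abs_real_inner_lt {F : Type*} [NormedAddCommGroup F]
    [InnerProductSpace ℝ F] {x y : F} :
    LinearIndependent ℝ ![x, y] ↔ |⟪x, y⟫| < ‖x‖ * ‖y‖ := by
  have hcs : ‖⟪x, y⟫‖ = ‖x‖ * ‖y‖ ↔ x = 0 ∨ ∃ r : ℝ, y = r • x :=
    (norm_inner_eq_norm_tfae ℝ x y).out 0 2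
  rw [(abs_real_inner_le_norm x y).lt_iff_ne, Ne, ← Real.norm_eq_abs, hcs]
  rcases eq_or_ne x 0 with rfl | hx
  · simpa using fun h : LinearIndependent ℝ ![0, y] => h.ne_zero 0 rfl
  · simp [hx, LinearIndependent.pair_iff' hx, eq_comm]

theorem abs_sq_sub_sq_sub_sq_lt_iff {a b c : ℝ} (ha : 0 ≤ a) (hb : 0 ≤ b) (hc : 0 ≤ c) :
    |c ^ 2 - a ^ 2 - b ^ 2| < 2 * a * b ↔ |a - b| < c ∧ c < a + b := by
  rw [abs_lt]
  constructor
  · rintro ⟨hl, hu⟩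
    exact ⟨abs_lt_of_sq_lt_sq (by linarith) hc,
      lt_of_pow_lt_pow_left₀ 2 (by positivity) (by linarith)⟩
  · rintro ⟨hl, hu⟩
    have hl' : (a - b) ^ 2 < c ^ 2 := sq_lt_sq' (abs_lt.mp hl).1 (abs_lt.mp hl).2
    have hu' : c ^ 2 < (a + b) ^ 2 := pow_lt_pow_left₀ hu hc two_ne_zero
    constructor <;> linarith

theorem EuclideanSpace.exists_norm_eq_norm_eq_inner_eq {a b p : ℝ} (ha : 0 ≤ a) (hb : 0 ≤ b)
    (hp : |p| ≤ a * b) :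
    ∃ x y : EuclideanSpace ℝ (Fin 2), ‖x‖ = a ∧ ‖y‖ = b ∧ ⟪x, y⟫ = p := by
  have hap : a * (p / a) = p := by
    rcases ha.eq_or_lt with rfl | ha
    · simpa [eq_comm] using hp
    · exact mul_div_cancel₀ p ha.ne'
  have hc_abs : |p / a| ≤ b := by
    rcases ha.eq_or_lt with rfl | ha
    · simpa using hb
    · rwa [abs_div, abs_of_pos ha, div_le_iff₀' ha]
  have hc : (p / a) ^ 2 ≤ b ^ 2 := sq_le_sq' (abs_le.mp hc_abs).1 (abs_le.mp hc_abs).2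
  refine ⟨!₂[a, 0], !₂[p / a, √(b ^ 2 - (p / a) ^ 2)], ?_, ?_, ?_⟩
  · simp [EuclideanSpace.norm_eq, Fin.sum_univ_two, ha]
  · simp [EuclideanSpace.norm_eq, Fin.sum_univ_two, Real.sq_sqrt (sub_nonneg.mpr hc), hb]
  · simpa [PiLp.inner_apply, Fin.sum_univ_two, mul_comm] using hap

/-- Characterization of side and diagonal lengths of a nondegenerate parallelogram
via the parallelogram equation and the triangle inequalities on the diagonal `u₄`. -/
theorem parallelogram_characterization_u4
    (u₁ u₂ u₃ u₄ : ℝ) (h₁ : 0 < u₁) (h₂ : 0 < u₂) (h₃ : 0 < u₃) (h₄ : 0 < u₄) :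
    (∃ A B F E : EuclideanSpace ℝ (Fin 2),
        B - A = F - E ∧
        ¬ Collinear ℝ ({A, E, F} : Set (EuclideanSpace ℝ (Fin 2))) ∧
        dist A E = u₁ ∧ dist E F = u₂ ∧ dist A F = u₃ ∧ dist E B = u₄) ↔
      (u₃ ^ 2 + u₄ ^ 2 = 2 * u₁ ^ 2 + 2 * u₂ ^ 2 ∧ |u₁ - u₂| < u₄ ∧ u₄ < u₁ + u₂) := by
  constructor
  · rintro ⟨A, B, F, E, hpar, hncol, rfl, rfl, rfl, rfl⟩
    have hli : |⟪A - E, F - E⟫| < ‖A - E‖ * ‖F - E‖ := by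
      rw [← linearIndependent_pair_iff_abs_real_inner_lt]
      simpa [collinear_iff_not_linearIndependent_vsub] using hncol
    rw [dist_eq_norm, dist_eq_norm', dist_eq_norm, dist_eq_norm',
      show A - F = (A - E) - (F - E) by abel, show B - E = (A - E) + (F - E) by rw [← hpar]; abel]
    set x := A - E
    set y := F - E
    refine ⟨by linarith [parallelogram_law_with_norm ℝ x y],
      (abs_sq_sub_sq_sub_sq_lt_iff (norm_nonneg x) (norm_nonneg y) (norm_nonneg _)).mp ?_⟩
    rw [norm_add_sq_real, show ‖x‖ ^ 2 + 2 * ⟪x, y⟫ + ‖y‖ ^ 2 - ‖x‖ ^ 2 - ‖y‖ ^ 2 = 2 * ⟪x, y⟫ by ring,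
      abs_mul, abs_two, mul_assoc]
    exact mul_lt_mul_of_pos_left hli two_pos
  · rintro ⟨hlaw, htri⟩
    have hp : |(u₄ ^ 2 - u₁ ^ 2 - u₂ ^ 2) / 2| < u₁ * u₂ := by
      rw [abs_div, abs_two, div_lt_iff₀ two_pos, mul_comm, ← mul_assoc]
      exact (abs_sq_sub_sq_sub_sq_lt_iff h₁.le h₂.le h₄.le).mpr htri
    obtain ⟨x, y, hx, hy, hxy⟩ := EuclideanSpace.exists_norm_eq_norm_eq_inner_eq h₁.le h₂.le hp.le
    have hli : LinearIndependent ℝ ![x, y] := by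
      rwa [linearIndependent_pair_iff_abs_real_inner_lt, hx, hy, hxy]
    refine ⟨x, x + y, y, 0, by simp, ?_, by simp [hx], by simp [hy], ?_, ?_⟩
    · simpa [collinear_iff_not_linearIndependent_vsub] using hli
    · rw [dist_eq_norm, ← sq_eq_sq₀ (norm_nonneg _) h₃.le, norm_sub_sq_real, hx, hy, hxy]
      linarith
    · rw [dist_comm, dist_eq_norm, sub_zero, ← sq_eq_sq₀ (norm_nonneg _) h₄.le, norm_add_sq_real,
        hx, hy, hxy]
      ring
end

section
/- Four positive real numbers u₁, u₂, u₃, u₄ are, respectively, the two side lengths and the two diagonal lengths of some nondegenerate parallelogram in the Euclidean plane if and only if they satisfy the equation u₃² + u₄² = 2u₁² + 2u₂² and the two inequalities |u₁ − u₂| < u₃ and |u₁ − u₂| < u₄. -/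
/-!
With `x = A - E` and `y = F - E` the diagonals are `x - y` and `x + y`, so
`u₃² = u₁² + u₂² - 2⟪x, y⟫` and `u₄² = u₁² + u₂² + 2⟪x, y⟫`; this gives the equation, and makes the
two inequalities `|u₁ - u₂| < u₃, u₄` equivalent to `|⟪x, y⟫| < u₁ u₂`, i.e. to strict
Cauchy–Schwarz, i.e. to `A, E, F` not being collinear. Conversely every value `c` with
`|c| < u₁ u₂` is the inner product of two plane vectors of lengths `u₁` and `u₂`.
-/

open Real RealInnerProductSpace EuclideanGeometry InnerProductGeometry

theorem EuclideanGeometry.not_collinear_iff_abs_inner_lt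
    {V P : Type*} [NormedAddCommGroup V] [InnerProductSpace ℝ V] [MetricSpace P]
    [NormedAddTorsor V P] {p₁ p₂ p₃ : P} :
    ¬Collinear ℝ ({p₁, p₂, p₃} : Set P) ↔
      |⟪p₁ -ᵥ p₂, p₃ -ᵥ p₂⟫| < dist p₁ p₂ * dist p₃ p₂ := by
  rw [collinear_iff_eq_or_eq_or_angle_eq_zero_or_angle_eq_pi, dist_eq_norm_vsub V,
    dist_eq_norm_vsub V, (abs_real_inner_le_norm _ _).lt_iff_ne]
  by_cases h₁ : p₁ = p₂
  · simp [h₁]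
  by_cases h₃ : p₃ = p₂
  · simp [h₃]
  have hx : p₁ -ᵥ p₂ ≠ 0 := vsub_ne_zero.2 h₁
  have hy : p₃ -ᵥ p₂ ≠ 0 := vsub_ne_zero.2 h₃
  rw [Ne, abs_eq (by positivity), inner_eq_mul_norm_iff_angle_eq_zero hx hy,
    inner_eq_neg_mul_norm_iff_angle_eq_pi hx hy]
  simp [h₁, h₃, angle]

theorem dist_sq_diagonals_of_sub_eq_sub
    {V : Type*} [NormedAddCommGroup V] [InnerProductSpace ℝ V] {A B F E : V}
    (h : B - A = F - E) :
    dist A F ^ 2 = dist A E ^ 2 + dist E F ^ 2 - 2 * ⟪A - E, F - E⟫ ∧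
      dist E B ^ 2 = dist A E ^ 2 + dist E F ^ 2 + 2 * ⟪A - E, F - E⟫ := by
  have hAF : A - F = (A - E) - (F - E) := by abel
  have hBE : B - E = (A - E) + (F - E) := by rw [h.symm]; abel
  rw [dist_eq_norm, dist_eq_norm, dist_comm E F, dist_eq_norm, dist_comm E B, dist_eq_norm,
    hAF, hBE, norm_sub_sq_real, norm_add_sq_real]
  constructor <;> ring

theorem abs_sub_lt_and_abs_sub_lt_iff {r s c d₁ d₂ : ℝ} (hd₁ : 0 ≤ d₁) (hd₂ : 0 ≤ d₂)
    (h₁ : d₁ ^ 2 = r ^ 2 + s ^ 2 - 2 * c) (h₂ : d₂ ^ 2 = r ^ 2 + s ^ 2 + 2 * c) :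
    |r - s| < d₁ ∧ |r - s| < d₂ ↔ |c| < r * s := by
  rw [← sq_lt_sq₀ (abs_nonneg _) hd₁, ← sq_lt_sq₀ (abs_nonneg _) hd₂, sq_abs, h₁, h₂, abs_lt]
  constructor <;> rintro ⟨_, _⟩ <;> constructor <;> nlinarith

theorem EuclideanSpace.exists_norm_eq_norm_eq_inner_eq_s3 {r s c : ℝ} (hr : 0 ≤ r) (hs : 0 ≤ s)
    (hc : |c| ≤ r * s) :
    ∃ x y : EuclideanSpace ℝ (Fin 2), ‖x‖ = r ∧ ‖y‖ = s ∧ ⟪x, y⟫ = c := by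
  have hcr : (c / r) ^ 2 ≤ s ^ 2 := by
    rw [← sq_abs, abs_div, abs_of_nonneg hr]
    gcongr
    exact div_le_of_le_mul₀ hr hs (by linarith)
  refine ⟨!₂[r, 0], !₂[c / r, √(s ^ 2 - (c / r) ^ 2)], ?_, ?_, ?_⟩
  · simp [EuclideanSpace.norm_eq, Real.sqrt_sq hr]
  · simp [EuclideanSpace.norm_eq, Real.sq_sqrt (sub_nonneg.2 hcr), Real.sqrt_sq hs]
  · have hc : c / r * r = c := by
      rcases hr.eq_or_lt with rfl | hr
      · simpa [eq_comm] using hc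
      · field_simp
    simpa [EuclideanSpace.inner_eq_star_dotProduct] using hc

theorem parallelogram_characterization_lower_general
    (u₁ u₂ u₃ u₄ : ℝ) (h₁ : 0 < u₁) (h₂ : 0 < u₂) :
    (∃ A B F E : EuclideanSpace ℝ (Fin 2),
        B - A = F - E ∧
        ¬ Collinear ℝ ({A, E, F} : Set (EuclideanSpace ℝ (Fin 2))) ∧
        dist A E = u₁ ∧ dist E F = u₂ ∧ dist A F = u₃ ∧ dist E B = u₄) ↔
      (u₃ ^ 2 + u₄ ^ 2 = 2 * u₁ ^ 2 + 2 * u₂ ^ 2 ∧ |u₁ - u₂| < u₃ ∧ |u₁ - u₂| < u₄) := by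
  constructor
  · rintro ⟨A, B, F, E, hB, hAEF, rfl, rfl, rfl, rfl⟩
    obtain ⟨hAF, hEB⟩ := dist_sq_diagonals_of_sub_eq_sub hB
    have hc := not_collinear_iff_abs_inner_lt.1 hAEF
    rw [dist_comm F E] at hc
    exact ⟨by linarith, (abs_sub_lt_and_abs_sub_lt_iff dist_nonneg dist_nonneg hAF hEB).2 hc⟩
  · rintro ⟨hsum, hu₃, hu₄⟩
    set c := (u₁ ^ 2 + u₂ ^ 2 - u₃ ^ 2) / 2
    have hd₃ : u₃ ^ 2 = u₁ ^ 2 + u₂ ^ 2 - 2 * c := by ring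
    have hd₄ : u₄ ^ 2 = u₁ ^ 2 + u₂ ^ 2 + 2 * c := by linarith
    have hu₃₀ : 0 ≤ u₃ := (abs_nonneg _).trans hu₃.le
    have hu₄₀ : 0 ≤ u₄ := (abs_nonneg _).trans hu₄.le
    have hc := (abs_sub_lt_and_abs_sub_lt_iff hu₃₀ hu₄₀ hd₃ hd₄).1 ⟨hu₃, hu₄⟩
    obtain ⟨x, y, hx, hy, hxy⟩ :=
      EuclideanSpace.exists_norm_eq_norm_eq_inner_eq_s3 h₁.le h₂.le hc.le
    have hAE : dist x 0 = u₁ := by simpa using hx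
    have hEF : dist 0 y = u₂ := by simpa using hy
    obtain ⟨hAF, hEB⟩ := dist_sq_diagonals_of_sub_eq_sub (A := x) (B := x + y) (F := y) (E := 0)
      (by abel)
    simp only [hAE, hEF, sub_zero, hxy] at hAF hEB
    refine ⟨x, x + y, y, 0, by abel, ?_, hAE, hEF, ?_, ?_⟩
    · rw [not_collinear_iff_abs_inner_lt]
      simpa [hx, hy, hxy] using hc
    · rwa [← sq_eq_sq₀ dist_nonneg hu₃₀, hd₃]
    · rwa [← sq_eq_sq₀ dist_nonneg hu₄₀, hd₄]

/-- Characterization of side and diagonal lengths of a nondegenerate parallelogram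
via the parallelogram equation and the two lower bounds `|u₁ - u₂| < u₃`, `|u₁ - u₂| < u₄`. -/
theorem parallelogram_characterization_lower
    (u₁ u₂ u₃ u₄ : ℝ) (h₁ : 0 < u₁) (h₂ : 0 < u₂) (h₃ : 0 < u₃) (h₄ : 0 < u₄) :
    (∃ A B F E : EuclideanSpace ℝ (Fin 2),
        B - A = F - E ∧
        ¬ Collinear ℝ ({A, E, F} : Set (EuclideanSpace ℝ (Fin 2))) ∧
        dist A E = u₁ ∧ dist E F = u₂ ∧ dist A F = u₃ ∧ dist E B = u₄) ↔
      (u₃ ^ 2 + u₄ ^ 2 = 2 * u₁ ^ 2 + 2 * u₂ ^ 2 ∧ |u₁ - u₂| < u₃ ∧ |u₁ - u₂| < u₄) :=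
  parallelogram_characterization_lower_general u₁ u₂ u₃ u₄ h₁ h₂
end

section
/- Let u₁, u₂, u₃, u₄ be positive real numbers satisfying u₃² + u₄² = 2u₁² + 2u₂² and |u₁ − u₂| < u₃ < u₁ + u₂. Then the number m = (2u₂ + u₃ − u₄)/(2u₁ + u₃ + u₄) satisfies 0 < m < 1. -/
/-- Wyss's first parallelogram parameter `m` lies strictly between 0 and 1. -/
theorem wyss_parameter_m_range
    (u₁ u₂ u₃ u₄ : ℝ) (h₁ : 0 < u₁) (h₂ : 0 < u₂) (h₃ : 0 < u₃) (h₄ : 0 < u₄)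
    (heq : u₃ ^ 2 + u₄ ^ 2 = 2 * u₁ ^ 2 + 2 * u₂ ^ 2)
    (hlt₁ : |u₁ - u₂| < u₃) (hlt₂ : u₃ < u₁ + u₂) :
    0 < (2 * u₂ + u₃ - u₄) / (2 * u₁ + u₃ + u₄) ∧
      (2 * u₂ + u₃ - u₄) / (2 * u₁ + u₃ + u₄) < 1 := by
  obtain ⟨ha, hb⟩ := abs_lt.mp hlt₁
  have hden : 0 < 2 * u₁ + u₃ + u₄ := by linarith
  have hnum : 0 < 2 * u₂ + u₃ - u₄ := by nlinarith
  have hlt : u₂ - u₁ < u₄ := by nlinarith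
  constructor
  · exact div_pos hnum hden
  · rw [div_lt_one hden]; linarith
end

section
/- Let u₁ > 0, u₂ > 0 and 0 < m < 1 be real numbers, and define u₃ = ((2m − m² + 1)·u₁ + (2m + m² − 1)·u₂)/(m² + 1) and u₄ = ((1 − m² − 2m)·u₁ + (2m − m² + 1)·u₂)/(m² + 1). Then 2u₁² + 2u₂² = u₃² + u₄², 2u₁ + u₃ + u₄ > 0, and (2u₂ + u₃ − u₄)/(2u₁ + u₃ + u₄) = m. -/
/-- The rational parametric solution of the parallelogram equation with
prescribed value of the parameter `m = (2u₂ + u₃ - u₄)/(2u₁ + u₃ + u₄)`. -/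
theorem wyss_param_solution_m
    (u₁ u₂ m : ℝ) (h₁ : 0 < u₁) (h₂ : 0 < u₂) (hm₀ : 0 < m) (hm₁ : m < 1)
    (u₃ u₄ : ℝ)
    (hu₃ : u₃ = ((2 * m - m ^ 2 + 1) * u₁ + (2 * m + m ^ 2 - 1) * u₂) / (m ^ 2 + 1))
    (hu₄ : u₄ = ((1 - m ^ 2 - 2 * m) * u₁ + (2 * m - m ^ 2 + 1) * u₂) / (m ^ 2 + 1)) :
    2 * u₁ ^ 2 + 2 * u₂ ^ 2 = u₃ ^ 2 + u₄ ^ 2 ∧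
      0 < 2 * u₁ + u₃ + u₄ ∧
      (2 * u₂ + u₃ - u₄) / (2 * u₁ + u₃ + u₄) = m := by
  have hd : (0:ℝ) < m ^ 2 + 1 := by positivity
  have hd' : (m:ℝ) ^ 2 + 1 ≠ 0 := ne_of_gt hd
  subst hu₃ hu₄
  have hsum : 2 * u₁ + (((2 * m - m ^ 2 + 1) * u₁ + (2 * m + m ^ 2 - 1) * u₂) / (m ^ 2 + 1))
      + (((1 - m ^ 2 - 2 * m) * u₁ + (2 * m - m ^ 2 + 1) * u₂) / (m ^ 2 + 1))
      = (4 * u₁ + 4 * m * u₂) / (m ^ 2 + 1) := by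
    field_simp; ring
  have hpos : 0 < 2 * u₁ + (((2 * m - m ^ 2 + 1) * u₁ + (2 * m + m ^ 2 - 1) * u₂) / (m ^ 2 + 1))
      + (((1 - m ^ 2 - 2 * m) * u₁ + (2 * m - m ^ 2 + 1) * u₂) / (m ^ 2 + 1)) := by
    rw [hsum]; positivity
  refine ⟨by field_simp; ring, hpos, ?_⟩
  rw [div_eq_iff (ne_of_gt hpos)]
  field_simp
  ring
end

section
/- Let u₁ > 0, u₂ > 0 and 0 < n < 1 be real numbers, and define u₃ = ((1 − 2n − n²)·u₁ + (1 + 2n − n²)·u₂)/(n² + 1) and u₄ = ((1 − n² + 2n)·u₁ + (2n + n² − 1)·u₂)/(n² + 1). Then 2u₁² + 2u₂² = u₃² + u₄², 2u₁ + u₃ + u₄ > 0, and (2u₂ − u₃ + u₄)/(2u₁ + u₃ + u₄) = n. -/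
/-- The rational parametric solution of the parallelogram equation with
prescribed value of the parameter `n = (2u₂ - u₃ + u₄)/(2u₁ + u₃ + u₄)`. -/
theorem wyss_param_solution_n
    (u₁ u₂ n : ℝ) (h₁ : 0 < u₁) (h₂ : 0 < u₂) (hn₀ : 0 < n) (hn₁ : n < 1)
    (u₃ u₄ : ℝ)
    (hu₃ : u₃ = ((1 - 2 * n - n ^ 2) * u₁ + (1 + 2 * n - n ^ 2) * u₂) / (n ^ 2 + 1))
    (hu₄ : u₄ = ((1 - n ^ 2 + 2 * n) * u₁ + (2 * n + n ^ 2 - 1) * u₂) / (n ^ 2 + 1)) :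
    2 * u₁ ^ 2 + 2 * u₂ ^ 2 = u₃ ^ 2 + u₄ ^ 2 ∧
      0 < 2 * u₁ + u₃ + u₄ ∧
      (2 * u₂ - u₃ + u₄) / (2 * u₁ + u₃ + u₄) = n := by
  have hd : (n ^ 2 + 1) ≠ 0 := by positivity
  have hsum : 2 * u₁ + u₃ + u₄ = (4 * u₁ + 4 * n * u₂) / (n ^ 2 + 1) := by
    rw [hu₃, hu₄]; field_simp; ring
  have hpos : 0 < 2 * u₁ + u₃ + u₄ := by
    rw [hsum]; positivity
  refine ⟨?_, hpos, ?_⟩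
  · rw [hu₃, hu₄]; field_simp; ring
  · rw [div_eq_iff (ne_of_gt hpos), hu₃, hu₄]; field_simp; ring
end

section
/- Let u₁, u₂, u₃, u₄ and v₁, v₂, v₃, v₄ be positive rational numbers satisfying 1 + uₖ² = vₖ² for k = 1, 2, 3, 4, the equation 2u₁² + 2u₂² = u₃² + u₄², and the inequalities u₃ < u₁ + u₂ and u₄ < u₁ + u₂. Then there exist rational numbers s₁, s₂, s₃, s₄ with 0 < sₖ < 1 and uₖ = (1 − sₖ²)/(2sₖ) for each k, such that s₄⁴s₁²s₂²s₃² + s₃⁴s₁²s₂²s₄² − 2s₂⁴s₁²s₃²s₄² − 2s₁⁴s₂²s₃²s₄² + 4s₁²s₂²s₃²s₄² − 2s₂²s₃²s₄² − 2s₁²s₃²s₄² + s₁²s₂²s₄² + s₁²s₂²s₃² = 0, and moreover s₁s₂²s₃ + s₁²s₂s₃ − s₁s₂s₃² + s₁s₂ − s₂s₃ − s₁s₃ < 0 and s₁s₂²s₄ + s₁²s₂s₄ − s₁s₂s₄² + s₁s₂ − s₂s₄ − s₁s₄ < 0. -/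
lemma aux_param (u v : ℚ) (hu : 0 < u) (hv : 0 < v) (h : 1 + u ^ 2 = v ^ 2) :
    0 < v - u ∧ v - u < 1 ∧ 1 - (v - u) ^ 2 = 2 * u * (v - u) := by
  have hvu : u < v := by nlinarith
  have hv1 : 1 < v := by nlinarith
  refine ⟨by linarith, by nlinarith, by nlinarith⟩

/-- Each rational slanted cuboid corresponds to a quadruple of rationals
`s₁, s₂, s₃, s₄ ∈ (0,1)` obeying the basic polynomial equation and the two
polynomial inequalities. -/
theorem rational_slanted_cuboid_param
    (u₁ u₂ u₃ u₄ v₁ v₂ v₃ v₄ : ℚ)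
    (hu₁ : 0 < u₁) (hu₂ : 0 < u₂) (hu₃ : 0 < u₃) (hu₄ : 0 < u₄)
    (hv₁ : 0 < v₁) (hv₂ : 0 < v₂) (hv₃ : 0 < v₃) (hv₄ : 0 < v₄)
    (h1 : 1 + u₁ ^ 2 = v₁ ^ 2) (h2 : 1 + u₂ ^ 2 = v₂ ^ 2)
    (h3 : 1 + u₃ ^ 2 = v₃ ^ 2) (h4 : 1 + u₄ ^ 2 = v₄ ^ 2)
    (h5 : 2 * u₁ ^ 2 + 2 * u₂ ^ 2 = u₃ ^ 2 + u₄ ^ 2)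
    (hlt₃ : u₃ < u₁ + u₂) (hlt₄ : u₄ < u₁ + u₂) :
    ∃ s₁ s₂ s₃ s₄ : ℚ,
      (0 < s₁ ∧ s₁ < 1) ∧ (0 < s₂ ∧ s₂ < 1) ∧ (0 < s₃ ∧ s₃ < 1) ∧ (0 < s₄ ∧ s₄ < 1) ∧
      u₁ = (1 - s₁ ^ 2) / (2 * s₁) ∧ u₂ = (1 - s₂ ^ 2) / (2 * s₂) ∧
      u₃ = (1 - s₃ ^ 2) / (2 * s₃) ∧ u₄ = (1 - s₄ ^ 2) / (2 * s₄) ∧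
      s₄ ^ 4 * s₁ ^ 2 * s₂ ^ 2 * s₃ ^ 2 + s₃ ^ 4 * s₁ ^ 2 * s₂ ^ 2 * s₄ ^ 2
        - 2 * s₂ ^ 4 * s₁ ^ 2 * s₃ ^ 2 * s₄ ^ 2 - 2 * s₁ ^ 4 * s₂ ^ 2 * s₃ ^ 2 * s₄ ^ 2
        + 4 * s₁ ^ 2 * s₂ ^ 2 * s₃ ^ 2 * s₄ ^ 2 - 2 * s₂ ^ 2 * s₃ ^ 2 * s₄ ^ 2
        - 2 * s₁ ^ 2 * s₃ ^ 2 * s₄ ^ 2 + s₁ ^ 2 * s₂ ^ 2 * s₄ ^ 2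
        + s₁ ^ 2 * s₂ ^ 2 * s₃ ^ 2 = 0 ∧
      s₁ * s₂ ^ 2 * s₃ + s₁ ^ 2 * s₂ * s₃ - s₁ * s₂ * s₃ ^ 2
        + s₁ * s₂ - s₂ * s₃ - s₁ * s₃ < 0 ∧
      s₁ * s₂ ^ 2 * s₄ + s₁ ^ 2 * s₂ * s₄ - s₁ * s₂ * s₄ ^ 2
        + s₁ * s₂ - s₂ * s₄ - s₁ * s₄ < 0 := by
  obtain ⟨p1, q1, e1⟩ := aux_param u₁ v₁ hu₁ hv₁ h1
  obtain ⟨p2, q2, e2⟩ := aux_param u₂ v₂ hu₂ hv₂ h2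
  obtain ⟨p3, q3, e3⟩ := aux_param u₃ v₃ hu₃ hv₃ h3
  obtain ⟨p4, q4, e4⟩ := aux_param u₄ v₄ hu₄ hv₄ h4
  set s₁ := v₁ - u₁; set s₂ := v₂ - u₂; set s₃ := v₃ - u₃; set s₄ := v₄ - u₄
  have r1 : u₁ = (1 - s₁ ^ 2) / (2 * s₁) := by field_simp; linarith [e1]
  have r2 : u₂ = (1 - s₂ ^ 2) / (2 * s₂) := by field_simp; linarith [e2]
  have r3 : u₃ = (1 - s₃ ^ 2) / (2 * s₃) := by field_simp; linarith [e3]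
  have r4 : u₄ = (1 - s₄ ^ 2) / (2 * s₄) := by field_simp; linarith [e4]
  refine ⟨s₁, s₂, s₃, s₄, ⟨p1, q1⟩, ⟨p2, q2⟩, ⟨p3, q3⟩, ⟨p4, q4⟩, r1, r2, r3, r4, ?_, ?_, ?_⟩
  · have f1 : (1 - s₁ ^ 2) ^ 2 = 4 * u₁ ^ 2 * s₁ ^ 2 := by rw [e1]; ring
    have f2 : (1 - s₂ ^ 2) ^ 2 = 4 * u₂ ^ 2 * s₂ ^ 2 := by rw [e2]; ring
    have f3 : (1 - s₃ ^ 2) ^ 2 = 4 * u₃ ^ 2 * s₃ ^ 2 := by rw [e3]; ring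
    have f4 : (1 - s₄ ^ 2) ^ 2 = 4 * u₄ ^ 2 * s₄ ^ 2 := by rw [e4]; ring
    linear_combination (-2*s₂^2*s₃^2*s₄^2) * f1 + (-2*s₁^2*s₃^2*s₄^2) * f2
      + (s₁^2*s₂^2*s₄^2) * f3 + (s₁^2*s₂^2*s₃^2) * f4
      - (4*s₁^2*s₂^2*s₃^2*s₄^2) * h5
  · have key : 0 < u₁ + u₂ - u₃ := by linarith
    have hs : 0 < s₁ * s₂ * s₃ := mul_pos (mul_pos p1 p2) p3
    have hid : s₁ * s₂ ^ 2 * s₃ + s₁ ^ 2 * s₂ * s₃ - s₁ * s₂ * s₃ ^ 2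
        + s₁ * s₂ - s₂ * s₃ - s₁ * s₃ = -(2 * (s₁ * s₂ * s₃) * (u₁ + u₂ - u₃)) := by
      linear_combination (-(s₂*s₃)) * e1 + (-(s₁*s₃)) * e2 + (s₁*s₂) * e3
    rw [hid]
    have := mul_pos hs key
    linarith
  · have key : 0 < u₁ + u₂ - u₄ := by linarith
    have hs : 0 < s₁ * s₂ * s₄ := mul_pos (mul_pos p1 p2) p4
    have hid : s₁ * s₂ ^ 2 * s₄ + s₁ ^ 2 * s₂ * s₄ - s₁ * s₂ * s₄ ^ 2
        + s₁ * s₂ - s₂ * s₄ - s₁ * s₄ = -(2 * (s₁ * s₂ * s₄) * (u₁ + u₂ - u₄)) := by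
      linear_combination (-(s₂*s₄)) * e1 + (-(s₁*s₄)) * e2 + (s₁*s₂) * e4
    rw [hid]
    have := mul_pos hs key
    linarith
end

section
/- Let s and μ be real numbers with 0 < s < 1 and 0 < μ < √2 − 1, and define θ = (1 − s²)·((1 − μ²)² − 4μ²)/(4μs(1 − μ²)), η = 4μs(1 − μ²)/((1 − s²)(1 + μ²)(1 − μ² + 2μ)), and ζ = (1 − s²)(1 + μ²)(1 − μ² − 2μ)/(4μs(1 − μ²)). Then, setting s₁ = s, s₂ = θ, s₃ = η, s₄ = ζ and uₖ = (1 − sₖ²)/(2sₖ) for k = 1, 2, 3, 4, the parallelogram equation 2u₁² + 2u₂² = u₃² + u₄² holds. -/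
/-!
With `u = pythLeg` and `v = pythHyp`, in the coordinates `a = u(s)`, `m = u(μ)`, `n = v(μ)`
(so `n² = 1 + m²`), Wyss's parameters are `θ = a(m² - 1)/m`,
`η⁻¹ = an(m + 1)/m` and `ζ = an(m - 1)/m`, and `u(η⁻¹)² = u(η)²`.
Since `4u(x)² = x² + x⁻² - 2`, the parallelogram equation for these values splits into
`8a² + 2θ² = η⁻² + ζ²` and `2θ⁻² = η² + ζ⁻²`, and each of them follows from `n² = 1 + m²`.
-/

noncomputable def pythLeg (s : ℝ) : ℝ := (1 - s ^ 2) / (2 * s)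

noncomputable def pythHyp (s : ℝ) : ℝ := (1 + s ^ 2) / (2 * s)

theorem one_add_pythLeg_sq {s : ℝ} (hs : s ≠ 0) : 1 + pythLeg s ^ 2 = pythHyp s ^ 2 := by
  unfold pythLeg pythHyp
  field_simp
  ring

theorem pythLeg_inv (s : ℝ) : pythLeg s⁻¹ = -pythLeg s := by
  unfold pythLeg
  rcases eq_or_ne s 0 with rfl | hs
  · simp
  · field_simp
    ring

theorem four_mul_pythLeg_sq {s : ℝ} (hs : s ≠ 0) : 4 * pythLeg s ^ 2 = s ^ 2 + s⁻¹ ^ 2 - 2 := by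
  unfold pythLeg
  field_simp
  ring

theorem pythLeg_pos {s : ℝ} (h₀ : 0 < s) (h₁ : s < 1) : 0 < pythLeg s := by
  unfold pythLeg
  have : 0 < 1 - s ^ 2 := by nlinarith
  positivity

theorem one_lt_pythLeg {μ : ℝ} (h₀ : 0 < μ) (h₁ : μ < √2 - 1) : 1 < pythLeg μ := by
  have hsq : (μ + 1) ^ 2 < 2 := by
    nlinarith [Real.sq_sqrt (show (0 : ℝ) ≤ 2 by norm_num), Real.sqrt_nonneg 2]
  unfold pythLeg
  rw [one_lt_div (by positivity)]
  nlinarith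

theorem wyss_parallelogram_identity {a m n : ℝ} (ha : a ≠ 0) (hm : m ≠ 0) (hm₁ : m ^ 2 ≠ 1)
    (hn : n ^ 2 = 1 + m ^ 2) :
    2 * a ^ 2 + 2 * pythLeg (a * (m ^ 2 - 1) / m) ^ 2 =
      pythLeg (a * n * (m + 1) / m) ^ 2 + pythLeg (a * n * (m - 1) / m) ^ 2 := by
  have hn₀ : n ≠ 0 := by rintro rfl; nlinarith
  have hp : m + 1 ≠ 0 := fun h ↦ hm₁ (by linear_combination (m - 1) * h)
  have hq : m - 1 ≠ 0 := fun h ↦ hm₁ (by linear_combination (m + 1) * h)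
  have hsq : 8 * a ^ 2 + 2 * (a * (m ^ 2 - 1) / m) ^ 2 =
      (a * n * (m + 1) / m) ^ 2 + (a * n * (m - 1) / m) ^ 2 := by
    field_simp
    linear_combination -2 * (m ^ 2 + 1) * hn
  have hinv : 2 * (a * (m ^ 2 - 1) / m)⁻¹ ^ 2 =
      (a * n * (m + 1) / m)⁻¹ ^ 2 + (a * n * (m - 1) / m)⁻¹ ^ 2 := by
    field_simp
    linear_combination 2 * (m ^ 2 - 1) ^ 2 * hn
  suffices 8 * a ^ 2 + 2 * (4 * pythLeg (a * (m ^ 2 - 1) / m) ^ 2) =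
      4 * pythLeg (a * n * (m + 1) / m) ^ 2 + 4 * pythLeg (a * n * (m - 1) / m) ^ 2 by
    linarith
  rw [four_mul_pythLeg_sq (by positivity), four_mul_pythLeg_sq (by positivity),
    four_mul_pythLeg_sq (by positivity)]
  linarith

section WyssReparametrization

variable {s μ : ℝ} (hs : s ≠ 0) (hμ : μ ≠ 0) (hμ₁ : 1 - μ ^ 2 ≠ 0)
include hs hμ hμ₁

theorem wyss_theta_eq :
    (1 - s ^ 2) * ((1 - μ ^ 2) ^ 2 - 4 * μ ^ 2) / (4 * μ * s * (1 - μ ^ 2)) =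
      pythLeg s * (pythLeg μ ^ 2 - 1) / pythLeg μ := by
  unfold pythLeg
  field_simp
  ring

theorem wyss_eta_eq :
    4 * μ * s * (1 - μ ^ 2) / ((1 - s ^ 2) * (1 + μ ^ 2) * (1 - μ ^ 2 + 2 * μ)) =
      (pythLeg s * pythHyp μ * (pythLeg μ + 1) / pythLeg μ)⁻¹ := by
  rw [inv_div]
  unfold pythLeg pythHyp
  field_simp
  ring

theorem wyss_zeta_eq :
    (1 - s ^ 2) * (1 + μ ^ 2) * (1 - μ ^ 2 - 2 * μ) / (4 * μ * s * (1 - μ ^ 2)) =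
      pythLeg s * pythHyp μ * (pythLeg μ - 1) / pythLeg μ := by
  unfold pythLeg pythHyp
  field_simp
  ring

end WyssReparametrization

/-- Wyss's two-parametric family: setting `s₁ = s`, `s₂ = θ(s,μ)`, `s₃ = η(s,μ)`,
`s₄ = ζ(s,μ)` and `uₖ = (1 - sₖ²)/(2sₖ)` solves the parallelogram equation. -/
theorem wyss_two_parametric_solution
    (s μ : ℝ) (hs₀ : 0 < s) (hs₁ : s < 1) (hμ₀ : 0 < μ) (hμ₁ : μ < Real.sqrt 2 - 1)
    (θ η ζ : ℝ)
    (hθ : θ = (1 - s ^ 2) * ((1 - μ ^ 2) ^ 2 - 4 * μ ^ 2) / (4 * μ * s * (1 - μ ^ 2)))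
    (hη : η = 4 * μ * s * (1 - μ ^ 2) / ((1 - s ^ 2) * (1 + μ ^ 2) * (1 - μ ^ 2 + 2 * μ)))
    (hζ : ζ = (1 - s ^ 2) * (1 + μ ^ 2) * (1 - μ ^ 2 - 2 * μ) / (4 * μ * s * (1 - μ ^ 2)))
    (u₁ u₂ u₃ u₄ : ℝ)
    (hu₁ : u₁ = (1 - s ^ 2) / (2 * s)) (hu₂ : u₂ = (1 - θ ^ 2) / (2 * θ))
    (hu₃ : u₃ = (1 - η ^ 2) / (2 * η)) (hu₄ : u₄ = (1 - ζ ^ 2) / (2 * ζ)) :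
    2 * u₁ ^ 2 + 2 * u₂ ^ 2 = u₃ ^ 2 + u₄ ^ 2 := by
  have hm : 1 < pythLeg μ := one_lt_pythLeg hμ₀ hμ₁
  have hμ_sq : 1 - μ ^ 2 ≠ 0 := by
    rintro h
    norm_num [pythLeg, h] at hm
  rw [hu₁, hu₂, hu₃, hu₄]
  change 2 * pythLeg s ^ 2 + 2 * pythLeg θ ^ 2 = pythLeg η ^ 2 + pythLeg ζ ^ 2
  rw [hθ, hη, hζ, wyss_theta_eq hs₀.ne' hμ₀.ne' hμ_sq, wyss_eta_eq hs₀.ne' hμ₀.ne' hμ_sq,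
    wyss_zeta_eq hs₀.ne' hμ₀.ne' hμ_sq, pythLeg_inv, neg_sq]
  refine wyss_parallelogram_identity (pythLeg_pos hs₀ hs₁).ne' (by positivity) ?_
    (one_add_pythLeg_sq hμ₀.ne').symm
  nlinarith
end
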